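/- arXiv:math/0210313 — 5 statements merged into one kernel-verified Lean document; each statement's English description precedes it below -/
import Mathlib

section
/- For every integer k ≥ 1, every real c > k, and every real x > 0, the vertical-line contour integral (1/2πi)∫_{(c)} Γ(s) x^{k−s} ds/(s−k), i.e. (1/2π)∫_{-∞}^{∞} Γ(c+it) x^{k−c−it}/(c+it−k) dt, converges and equals the upper incomplete gamma value ∫_x^∞ e^{−ξ} ξ^{k−1} dξ. -/
open MeasureTheory Complex Real Set

lemma norm_Gamma_le {s : ℂ} (hs : 0 < s.re) : ‖Complex.Gamma s‖ ≤ Real.Gamma s.re := by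
  rw [Complex.Gamma_eq_integral hs, Real.Gamma_eq_integral hs, Complex.GammaIntegral]
  refine (norm_integral_le_integral_norm _).trans_eq ?_
  refine setIntegral_congr_fun measurableSet_Ioi fun t ht => ?_
  rw [norm_mul, Complex.norm_real, Real.norm_eq_abs,
    Complex.norm_cpow_eq_rpow_re_of_pos ht]
  simp [_root_.abs_of_nonneg (Real.exp_pos _).le, Complex.sub_re]

lemma integrable_inv_sq_add {a : ℝ} (ha : a ≠ 0) :
    Integrable fun t : ℝ => (a ^ 2 + t ^ 2)⁻¹ := by
  have h := (integrable_inv_one_add_sq.comp_div ha).const_mul (a ^ 2)⁻¹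
  refine h.congr ?_
  filter_upwards with t
  have h1 : a ^ 2 + t ^ 2 ≠ 0 := by positivity
  field_simp

lemma norm_Gamma_line_le {c : ℝ} (hc : 0 < c) (t : ℝ) :
    ‖Complex.Gamma (c + t * Complex.I)‖ ≤ Real.Gamma (c + 2) / (c ^ 2 + t ^ 2) := by
  set s : ℂ := c + t * Complex.I with hs
  have hre : s.re = c := by simp [hs]
  have hs0 : s ≠ 0 := fun h => by simp [h] at hre; linarith
  have hs1 : s + 1 ≠ 0 := fun h => by
    have : (s + 1).re = 0 := by rw [h]; simp
    simp [Complex.add_re, hre] at this; linarith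
  have key : Complex.Gamma s = Complex.Gamma (s + 2) / (s * (s + 1)) := by
    have h1 : Complex.Gamma (s + 1) = s * Complex.Gamma s := Complex.Gamma_add_one s hs0
    have h2 : Complex.Gamma (s + 2) = (s + 1) * Complex.Gamma (s + 1) := by
      have := Complex.Gamma_add_one (s + 1) hs1
      rw [← this]; ring_nf
    rw [h2, h1]
    field_simp
  rw [key, norm_div, norm_mul]
  have hb : ‖Complex.Gamma (s + 2)‖ ≤ Real.Gamma (c + 2) := by
    have := norm_Gamma_le (s := s + 2) (by simp [Complex.add_re, hre]; linarith)
    simpa [Complex.add_re, hre] using this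
  have hnorm1 : c ^ 2 + t ^ 2 ≤ ‖s‖ * ‖s + 1‖ := by
    have e1 : ‖s‖ = Real.sqrt (c ^ 2 + t ^ 2) := by
      rw [hs, Complex.norm_add_mul_I]
    have e2 : ‖s + 1‖ = Real.sqrt ((c + 1) ^ 2 + t ^ 2) := by
      have : s + 1 = ((c + 1 : ℝ) : ℂ) + (t : ℝ) * Complex.I := by
        rw [hs]; push_cast; ring
      rw [this, Complex.norm_add_mul_I]
    rw [e1, e2]
    calc c ^ 2 + t ^ 2 = Real.sqrt (c ^ 2 + t ^ 2) * Real.sqrt (c ^ 2 + t ^ 2) := by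
          rw [Real.mul_self_sqrt (by positivity)]
      _ ≤ _ := by
          have hle : Real.sqrt (c ^ 2 + t ^ 2) ≤ Real.sqrt ((c + 1) ^ 2 + t ^ 2) := by
            apply Real.sqrt_le_sqrt; nlinarith
          exact mul_le_mul_of_nonneg_left hle (Real.sqrt_nonneg _)
  have hpos : (0:ℝ) < c ^ 2 + t ^ 2 := by positivity
  have hG2 : (0:ℝ) ≤ Real.Gamma (c + 2) := Real.Gamma_nonneg_of_nonneg (by linarith)
  calc ‖Complex.Gamma (s + 2)‖ / (‖s‖ * ‖s + 1‖)
      ≤ Real.Gamma (c + 2) / (c ^ 2 + t ^ 2) := by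
        apply div_le_div₀ hG2 hb hpos hnorm1

lemma continuous_Gamma_line (c : ℝ) (hc : 0 < c) :
    Continuous fun t : ℝ => Complex.Gamma (c + t * Complex.I) := by
  apply continuous_iff_continuousAt.mpr
  intro t
  have h1 : ContinuousAt Complex.Gamma (c + t * Complex.I) := by
    refine (Complex.differentiableAt_Gamma _ fun m => ?_).continuousAt
    intro h
    have : (↑c + ↑t * Complex.I).re = (-(m:ℂ)).re := by rw [h]
    simp at this
    have : (0:ℝ) ≤ m := Nat.cast_nonneg m
    linarith
  show ContinuousAt (Complex.Gamma ∘ fun t : ℝ => (c : ℂ) + t * Complex.I) t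
  exact ContinuousAt.comp (f := fun t : ℝ => (c : ℂ) + t * Complex.I) (x := t) h1
    ((by fun_prop : Continuous (fun t : ℝ => (c : ℂ) + t * Complex.I)).continuousAt)

lemma integrable_Gamma_line {c : ℝ} (hc : 0 < c) :
    Integrable fun t : ℝ => Complex.Gamma (c + t * Complex.I) := by
  refine Integrable.mono' ((integrable_inv_sq_add (ne_of_gt hc)).const_mul (Real.Gamma (c + 2)))
    (continuous_Gamma_line c hc).aestronglyMeasurable ?_
  filter_upwards with t
  simpa [div_eq_mul_inv] using norm_Gamma_line_le hc t

lemma mellin_exp {s : ℂ} (hs : 0 < s.re) :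
    mellin (fun ξ : ℝ => (Real.exp (-ξ) : ℂ)) s = Complex.Gamma s := by
  rw [Complex.Gamma_eq_integral hs, Complex.GammaIntegral, mellin]
  refine setIntegral_congr_fun measurableSet_Ioi fun t ht => ?_
  simp [smul_eq_mul, mul_comm]

lemma mellinConvergent_exp {c : ℝ} (hc : 0 < c) :
    MellinConvergent (fun ξ : ℝ => (Real.exp (-ξ) : ℂ)) c := by
  have h := Complex.GammaIntegral_convergent (s := c) (by simpa using hc)
  refine h.congr_fun (fun t ht => ?_) measurableSet_Ioi
  simp [smul_eq_mul, mul_comm]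

lemma exp_eq_mellin_inv {c : ℝ} (hc : 0 < c) {ξ : ℝ} (hξ : 0 < ξ) :
    ((2 * π : ℝ) : ℂ) * (Real.exp (-ξ) : ℂ)
      = ∫ t : ℝ, (ξ : ℂ) ^ (-((c : ℂ) + t * Complex.I)) * Complex.Gamma (c + t * Complex.I) := by
  have hVert : Complex.VerticalIntegrable (mellin fun ξ : ℝ => (Real.exp (-ξ) : ℂ)) c := by
    refine (integrable_Gamma_line hc).congr ?_
    filter_upwards with t
    rw [mellin_exp (by simp [Complex.add_re]; exact hc)]
  have hcont : ContinuousAt (fun ξ : ℝ => (Real.exp (-ξ) : ℂ)) ξ := by fun_prop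
  have := mellinInv_mellin_eq c (fun ξ : ℝ => (Real.exp (-ξ) : ℂ)) hξ
    (mellinConvergent_exp hc) hVert hcont
  rw [mellinInv] at this
  have h2π : ((2 * π : ℝ) : ℂ) ≠ 0 := by
    simp [Real.pi_ne_zero]
  have hrew : (∫ y : ℝ, (ξ : ℂ) ^ (-((c : ℂ) + y * Complex.I)) •
        mellin (fun ξ : ℝ => (Real.exp (-ξ) : ℂ)) ((c : ℂ) + y * Complex.I))
      = ∫ t : ℝ, (ξ : ℂ) ^ (-((c : ℂ) + t * Complex.I)) * Complex.Gamma (c + t * Complex.I) := by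
    refine integral_congr_ae (Filter.Eventually.of_forall fun t => ?_)
    beta_reduce
    rw [mellin_exp (by simp [Complex.add_re]; exact hc), smul_eq_mul]
  beta_reduce at this
  rw [hrew, real_smul] at this
  rw [← this, ← mul_assoc,
    show ((2 * π : ℝ) : ℂ) * ((1 / (2 * π) : ℝ) : ℂ) = 1 by
      push_cast
      exact mul_one_div_cancel (by simp [Real.pi_ne_zero] : (2 * (π : ℂ)) ≠ 0),
    one_mul]

/-- For every integer `k ≥ 1`, every real `c > k` and every real `x > 0`,
the vertical-line contour integral `(1/2πi)∫_{(c)} Γ(s) x^{k-s} ds/(s-k)`, i.e.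
`(1/2π)∫_ℝ Γ(c+it) x^{k-c-it}/(c+it-k) dt`, converges and equals
`∫_x^∞ e^{-ξ} ξ^{k-1} dξ`. -/
theorem vertical_line_integral_eq_incomplete_gamma
    (k : ℕ) (hk : 1 ≤ k) (c : ℝ) (hc : (k : ℝ) < c) (x : ℝ) (hx : 0 < x) :
    Integrable (fun t : ℝ =>
      Complex.Gamma (c + t * Complex.I) *
        (x : ℂ) ^ ((k : ℂ) - (c + t * Complex.I)) / ((c + t * Complex.I) - k)) ∧
    (1 / (2 * π) : ℂ) * ∫ t : ℝ,
        Complex.Gamma (c + t * Complex.I) *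
          (x : ℂ) ^ ((k : ℂ) - (c + t * Complex.I)) / ((c + t * Complex.I) - k)
      = ((∫ ξ in Set.Ioi x, Real.exp (-ξ) * ξ ^ (k - 1) : ℝ) : ℂ) := by
  have hk1 : (1:ℝ) ≤ (k:ℝ) := by exact_mod_cast hk
  have hc0 : 0 < c := by linarith
  have hck : 0 < c - (k:ℝ) := by linarith
  have hxC : (x:ℂ) ≠ 0 := ofReal_ne_zero.2 hx.ne'
  have hden : ∀ t : ℝ, ((c:ℂ) + t * Complex.I) - (k:ℕ) ≠ 0 := by
    intro t h
    have h2 : (((c:ℂ) + t * Complex.I) - (k:ℕ)).re = 0 := by rw [h]; simp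
    simp at h2
    linarith
  -- integrability of the goal integrand
  have hbound1 : ∀ t : ℝ,
      ‖Complex.Gamma (c + t * Complex.I) * (x:ℂ) ^ ((k:ℂ) - ((c:ℂ) + t * Complex.I)) /
          (((c:ℂ) + t * Complex.I) - (k:ℕ))‖
        ≤ (Real.Gamma (c + 2) * x ^ ((k:ℝ) - c) / (c - k)) * (c ^ 2 + t ^ 2)⁻¹ := by
    intro t
    rw [norm_div, norm_mul]
    have hxn : ‖(x:ℂ) ^ ((k:ℂ) - ((c:ℂ) + t * Complex.I))‖ = x ^ ((k:ℝ) - c) := by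
      rw [Complex.norm_cpow_eq_rpow_re_of_pos hx]
      congr 1
      simp
    have hdl : c - (k:ℝ) ≤ ‖((c:ℂ) + t * Complex.I) - (k:ℕ)‖ := by
      have h1 := Complex.re_le_norm (((c:ℂ) + t * Complex.I) - (k:ℕ))
      have h2 : (((c:ℂ) + t * Complex.I) - (k:ℕ)).re = c - k := by simp
      linarith
    have hGnn : (0:ℝ) ≤ Real.Gamma (c + 2) / (c ^ 2 + t ^ 2) :=
      div_nonneg (Real.Gamma_nonneg_of_nonneg (by linarith)) (by positivity)
    calc ‖Complex.Gamma (c + t * Complex.I)‖ * ‖(x:ℂ) ^ ((k:ℂ) - ((c:ℂ) + t * Complex.I))‖ /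
          ‖((c:ℂ) + t * Complex.I) - (k:ℕ)‖
        ≤ (Real.Gamma (c + 2) / (c ^ 2 + t ^ 2)) * x ^ ((k:ℝ) - c) / (c - (k:ℝ)) := by
          apply div_le_div₀ (by positivity) ?_ hck hdl
          rw [hxn]
          exact mul_le_mul_of_nonneg_right (norm_Gamma_line_le hc0 t)
            (Real.rpow_nonneg hx.le _)
      _ = (Real.Gamma (c + 2) * x ^ ((k:ℝ) - c) / (c - k)) * (c ^ 2 + t ^ 2)⁻¹ := by
          rw [div_eq_mul_inv, div_eq_mul_inv, div_eq_mul_inv]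
          ring
  have hInt : Integrable (fun t : ℝ =>
      Complex.Gamma (c + t * Complex.I) *
        (x : ℂ) ^ ((k : ℂ) - (c + t * Complex.I)) / ((c + t * Complex.I) - (k:ℕ))) := by
    refine Integrable.mono'
      ((integrable_inv_sq_add hc0.ne').const_mul (Real.Gamma (c + 2) * x ^ ((k:ℝ) - c) / (c - k)))
      ?_ (Filter.Eventually.of_forall hbound1)
    apply Continuous.aestronglyMeasurable
    apply Continuous.div
    · exact (continuous_Gamma_line c hc0).mul
        (Continuous.const_cpow (by fun_prop) (Or.inl hxC))
    · fun_prop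
    · exact hden
  refine ⟨hInt, ?_⟩
  -- step A : rewrite the integrand as an inner integral over ξ
  have stepA : ∀ t : ℝ,
      Complex.Gamma (c + t * Complex.I) * (x:ℂ) ^ ((k:ℂ) - ((c:ℂ) + t * Complex.I)) /
          (((c:ℂ) + t * Complex.I) - (k:ℕ))
        = ∫ ξ in Ioi x, Complex.Gamma (c + t * Complex.I) *
            (ξ:ℂ) ^ (((k:ℂ) - 1) - ((c:ℂ) + t * Complex.I)) := by
    intro t
    rw [integral_const_mul, integral_Ioi_cpow_of_lt (by simp; linarith) hx,
      show ((k:ℂ) - 1) - ((c:ℂ) + t * Complex.I) + 1 = (k:ℂ) - ((c:ℂ) + t * Complex.I) by ring,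
      mul_div_assoc]
    congr 1
    rw [neg_div, ← div_neg, neg_sub]
  -- Fubini
  have hM : (volume.restrict (Ioi x)).prod (volume : Measure ℝ)
      = ((volume : Measure ℝ).prod volume).restrict (Ioi x ×ˢ univ) :=
    Measure.restrict_prod_eq_prod_univ _
  have hF2 : Integrable (Function.uncurry fun ξ t : ℝ =>
      Complex.Gamma (c + t * Complex.I) * (ξ:ℂ) ^ (((k:ℂ) - 1) - ((c:ℂ) + t * Complex.I)))
      ((volume.restrict (Ioi x)).prod volume) := by
    refine Integrable.mono'
      (Integrable.mul_prod (μ := volume.restrict (Ioi x)) (ν := volume)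
        (f := fun ξ : ℝ => ξ ^ ((k:ℝ) - 1 - c))
        (g := fun t : ℝ => Real.Gamma (c + 2) * (c ^ 2 + t ^ 2)⁻¹)
        (integrableOn_Ioi_rpow_of_lt (by linarith) hx)
        ((integrable_inv_sq_add hc0.ne').const_mul _)) ?_ ?_
    · rw [hM]
      refine ContinuousOn.aestronglyMeasurable ?_ (measurableSet_Ioi.prod MeasurableSet.univ)
      intro p hp
      apply ContinuousAt.continuousWithinAt
      apply ContinuousAt.mul
      · exact ((continuous_Gamma_line c hc0).comp continuous_snd).continuousAt
      · apply ContinuousAt.cpow (by fun_prop) (by fun_prop)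
        exact Complex.ofReal_mem_slitPlane.2 (hx.trans hp.1)
    · rw [hM]
      filter_upwards [ae_restrict_mem (measurableSet_Ioi.prod MeasurableSet.univ)] with p hp
      have h0 : (0:ℝ) < p.1 := hx.trans hp.1
      have hξ : ‖(p.1:ℂ) ^ (((k:ℂ) - 1) - ((c:ℂ) + p.2 * Complex.I))‖
          = p.1 ^ ((k:ℝ) - 1 - c) := by
        rw [Complex.norm_cpow_eq_rpow_re_of_pos h0]
        congr 1
        simp
      calc ‖Function.uncurry (fun ξ t : ℝ => Complex.Gamma (c + t * Complex.I) *
              (ξ:ℂ) ^ (((k:ℂ) - 1) - ((c:ℂ) + t * Complex.I))) p‖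
          = ‖Complex.Gamma (c + p.2 * Complex.I)‖ * p.1 ^ ((k:ℝ) - 1 - c) := by
            rw [Function.uncurry, norm_mul, hξ]
        _ ≤ (Real.Gamma (c + 2) / (c ^ 2 + p.2 ^ 2)) * p.1 ^ ((k:ℝ) - 1 - c) :=
            mul_le_mul_of_nonneg_right (norm_Gamma_line_le hc0 p.2) (Real.rpow_nonneg h0.le _)
        _ = p.1 ^ ((k:ℝ) - 1 - c) * (Real.Gamma (c + 2) * (c ^ 2 + p.2 ^ 2)⁻¹) := by
            rw [div_eq_mul_inv]; ring
  -- step C : inner t-integral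
  have stepC : ∀ ξ ∈ Ioi x,
      (∫ t : ℝ, Complex.Gamma (c + t * Complex.I) *
          (ξ:ℂ) ^ (((k:ℂ) - 1) - ((c:ℂ) + t * Complex.I)))
        = ((2 * π : ℝ) : ℂ) * ((Real.exp (-ξ) : ℂ) * (ξ:ℂ) ^ (k - 1 : ℕ)) := by
    intro ξ hξ
    have hξ0 : (0:ℝ) < ξ := hx.trans hξ
    have hξC : (ξ:ℂ) ≠ 0 := ofReal_ne_zero.2 hξ0.ne'
    have hcast : ((k:ℂ) - 1) = ((k - 1 : ℕ) : ℂ) := by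
      have := Nat.cast_sub (R := ℂ) hk
      rw [this, Nat.cast_one]
    have hptw : ∀ t : ℝ, Complex.Gamma (c + t * Complex.I) *
        (ξ:ℂ) ^ (((k:ℂ) - 1) - ((c:ℂ) + t * Complex.I))
        = (ξ:ℂ) ^ ((k:ℂ) - 1) *
          ((ξ:ℂ) ^ (-((c:ℂ) + t * Complex.I)) * Complex.Gamma (c + t * Complex.I)) := by
      intro t
      rw [sub_eq_add_neg, Complex.cpow_add _ _ hξC]
      ring
    rw [integral_congr_ae (Filter.Eventually.of_forall hptw), integral_const_mul,
      ← exp_eq_mellin_inv hc0 hξ0, hcast, Complex.cpow_natCast]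
    ring
  -- assemble
  calc (1 / (2 * π) : ℂ) * ∫ t : ℝ,
        Complex.Gamma (c + t * Complex.I) *
          (x : ℂ) ^ ((k : ℂ) - (c + t * Complex.I)) / ((c + t * Complex.I) - (k:ℕ))
      = (1 / (2 * π) : ℂ) * ∫ ξ in Ioi x, ∫ t : ℝ, Complex.Gamma (c + t * Complex.I) *
          (ξ:ℂ) ^ (((k:ℂ) - 1) - ((c:ℂ) + t * Complex.I)) := by
        rw [integral_congr_ae (Filter.Eventually.of_forall stepA),
          ← integral_integral_swap hF2]
    _ = (1 / (2 * π) : ℂ) * ∫ ξ in Ioi x, ((2 * π : ℝ) : ℂ) *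
          ((Real.exp (-ξ) : ℂ) * (ξ:ℂ) ^ (k - 1 : ℕ)) := by
        rw [setIntegral_congr_fun measurableSet_Ioi stepC]
    _ = ∫ ξ in Ioi x, (Real.exp (-ξ) : ℂ) * (ξ:ℂ) ^ (k - 1 : ℕ) := by
        rw [integral_const_mul, ← mul_assoc,
          show (1 / (2 * π) : ℂ) * ((2 * π : ℝ) : ℂ) = 1 by
            push_cast
            rw [one_div]
            exact inv_mul_cancel₀ (by simp [Real.pi_ne_zero]),
          one_mul]
    _ = ((∫ ξ in Set.Ioi x, Real.exp (-ξ) * ξ ^ (k - 1) : ℝ) : ℂ) := by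
        have h : (∫ ξ in Ioi x, ((Real.exp (-ξ) * ξ ^ (k - 1) : ℝ) : ℂ))
            = (((∫ ξ in Set.Ioi x, Real.exp (-ξ) * ξ ^ (k - 1) : ℝ)) : ℂ) :=
          _root_.integral_ofReal
        refine Eq.trans ?_ h
        refine integral_congr_ae (Filter.Eventually.of_forall fun ξ => ?_)
        push_cast [Complex.ofReal_exp]
        ring
end

section
/- For every integer k ≥ 1, every real c > k, and every real x > 0, the vertical-line contour integral (1/2πi)∫_{(c)} Γ(s) x^{k−s} ds/(s−k)², i.e. (1/2π)∫_{-∞}^{∞} Γ(c+it) x^{k−c−it}/(c+it−k)² dt, converges and equals ∫_x^∞ e^{−ξ} ξ^{k−1} (log ξ − log x) dξ. -/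
open MeasureTheory Complex Real Set
open scoped FourierTransform

lemma aux_integrable_inv_sq_add {a : ℝ} (ha : 0 < a) :
    Integrable fun t : ℝ => (a ^ 2 + t ^ 2)⁻¹ := by
  have h := (integrable_inv_one_add_sq.comp_div ha.ne').const_mul ((a ^ 2)⁻¹)
  refine h.congr (Filter.Eventually.of_forall fun t => ?_)
  have h1 : 1 + (t / a) ^ 2 = (a ^ 2 + t ^ 2) / a ^ 2 := by field_simp
  simp only [h1]
  rw [inv_div]
  field_simp

lemma aux_gamma_bound {c : ℝ} (hc : 0 < c) (t : ℝ) :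
    ‖Complex.Gamma (c + t * Complex.I)‖ ≤ Real.Gamma c := by
  have hre : 0 < ((c : ℂ) + t * Complex.I).re := by simp [hc]
  rw [Complex.Gamma_eq_integral hre]
  rw [Real.Gamma_eq_integral hc]
  refine norm_integral_le_of_norm_le (Real.GammaIntegral_convergent hc) ?_
  filter_upwards [ae_restrict_mem measurableSet_Ioi] with u hu
  rw [norm_mul]
  have h1 : ‖((Real.exp (-u) : ℝ) : ℂ)‖ = Real.exp (-u) := by
    rw [Complex.norm_real, Real.norm_eq_abs, abs_of_pos (Real.exp_pos _)]
  have h2 : ‖(u : ℂ) ^ ((c : ℂ) + t * Complex.I - 1)‖ = u ^ (c - 1) := by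
    rw [Complex.norm_cpow_eq_rpow_re_of_pos hu]
    congr 1
    simp
  rw [h1, h2]

lemma aux_integrableOn_mul_cexp {b : ℂ} (hb : 0 < b.re) :
    IntegrableOn (fun w : ℝ => (w : ℂ) * Complex.exp (-b * w)) (Ioi 0) := by
  have hmaj : IntegrableOn (fun w : ℝ => w ^ (1:ℝ) * Real.exp (-b.re * w ^ (1:ℝ))) (Ioi 0) :=
    integrableOn_rpow_mul_exp_neg_mul_rpow (by norm_num) zero_lt_one hb
  refine Integrable.mono' hmaj ?_ ?_
  · exact (Complex.continuous_ofReal.mul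
      ((continuous_const.mul Complex.continuous_ofReal).cexp)).aestronglyMeasurable.restrict
  · filter_upwards [ae_restrict_mem measurableSet_Ioi] with w hw
    rw [norm_mul, Complex.norm_real, Real.norm_eq_abs, abs_of_pos hw,
      Complex.norm_exp]
    simp [Real.rpow_one]

lemma aux_integral_mul_cexp {b : ℂ} (hb : 0 < b.re) :
    ∫ w in Ioi (0:ℝ), (w : ℂ) * Complex.exp (-b * w) = b⁻¹ ^ 2 := by
  have hb0 : b ≠ 0 := fun h => by simp [h] at hb
  set F : ℝ → ℂ := fun w => -(b⁻¹ * w + b⁻¹ ^ 2) * Complex.exp (-b * w) with hF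
  have hderiv : ∀ w ∈ Ioi (0:ℝ), HasDerivAt F ((w : ℂ) * Complex.exp (-b * w)) w := by
    intro w _
    have h1 : HasDerivAt (fun z : ℂ => -(b⁻¹ * z + b⁻¹ ^ 2) * Complex.exp (-b * z))
        ((w : ℂ) * Complex.exp (-b * w)) (w : ℂ) := by
      have hd1 : HasDerivAt (fun z : ℂ => -(b⁻¹ * z + b⁻¹ ^ 2)) (-b⁻¹) (w : ℂ) := by
        have h := (((hasDerivAt_id ((w:ℂ))).const_mul b⁻¹).add_const (b⁻¹ ^ 2)).neg
        simp only [id_eq] at h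
        rw [mul_one] at h
        exact h
      have hd2 : HasDerivAt (fun z : ℂ => Complex.exp (-b * z)) (-b * Complex.exp (-b * w)) (w : ℂ) := by
        simpa [mul_comm] using ((hasDerivAt_id ((w:ℂ))).const_mul (-b)).cexp
      have := hd1.mul hd2
      refine this.congr_deriv ?_
      field_simp
      ring
    exact h1.comp_ofReal
  have hcont : ContinuousWithinAt F (Ici 0) 0 := by
    refine Continuous.continuousWithinAt ?_
    fun_prop
  have htend : Filter.Tendsto F Filter.atTop (nhds 0) := by
    rw [tendsto_zero_iff_norm_tendsto_zero]
    have hbound : ∀ᶠ w : ℝ in Filter.atTop, ‖F w‖ ≤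
        ‖b⁻¹‖ * (w * Real.exp (-b.re * w)) + ‖b⁻¹ ^ 2‖ * Real.exp (-b.re * w) := by
      filter_upwards [Filter.eventually_ge_atTop (0:ℝ)] with w hw
      rw [hF]
      simp only [norm_mul, norm_neg, Complex.norm_exp]
      have : (-b * w).re = -b.re * w := by simp
      rw [this]
      have h1 : ‖b⁻¹ * w + b⁻¹ ^ 2‖ ≤ ‖b⁻¹‖ * w + ‖b⁻¹ ^ 2‖ := by
        refine (norm_add_le _ _).trans ?_
        gcongr
        rw [norm_mul]
        simp only [Complex.norm_real, Real.norm_eq_abs, _root_.abs_of_nonneg hw, le_refl]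
      calc ‖b⁻¹ * ↑w + b⁻¹ ^ 2‖ * Real.exp (-b.re * w)
          ≤ (‖b⁻¹‖ * w + ‖b⁻¹ ^ 2‖) * Real.exp (-b.re * w) :=
            mul_le_mul_of_nonneg_right h1 (Real.exp_pos _).le
        _ = ‖b⁻¹‖ * (w * Real.exp (-b.re * w)) + ‖b⁻¹ ^ 2‖ * Real.exp (-b.re * w) := by ring
    have hlim : Filter.Tendsto (fun w : ℝ =>
        ‖b⁻¹‖ * (w * Real.exp (-b.re * w)) + ‖b⁻¹ ^ 2‖ * Real.exp (-b.re * w))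
        Filter.atTop (nhds 0) := by
      have l1 : Filter.Tendsto (fun w : ℝ => w * Real.exp (-b.re * w)) Filter.atTop (nhds 0) := by
        have := tendsto_rpow_mul_exp_neg_mul_atTop_nhds_zero 1 b.re hb
        refine this.congr' ?_
        filter_upwards [Filter.eventually_gt_atTop (0:ℝ)] with w hw
        rw [Real.rpow_one]
      have l2 : Filter.Tendsto (fun w : ℝ => Real.exp (-b.re * w)) Filter.atTop (nhds 0) := by
        simp only [neg_mul]
        exact Real.tendsto_exp_atBot.comp (Filter.tendsto_neg_atBot_iff.mpr
          (Filter.Tendsto.const_mul_atTop hb Filter.tendsto_id))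
      have := (l1.const_mul ‖b⁻¹‖).add (l2.const_mul ‖b⁻¹ ^ 2‖)
      simpa using this
    exact squeeze_zero' (Filter.Eventually.of_forall fun w => norm_nonneg _) hbound hlim
  have := integral_Ioi_of_hasDerivAt_of_tendsto hcont hderiv (aux_integrableOn_mul_cexp hb) htend
  rw [this, hF]
  simp

noncomputable def auxF (a : ℝ) : ℝ → ℂ := fun w =>
  ((max w 0 : ℝ) : ℂ) * Complex.exp (-(a : ℂ) * (max w 0 : ℝ))

lemma auxF_of_nonneg {a w : ℝ} (hw : 0 ≤ w) :
    auxF a w = (w : ℂ) * Complex.exp (-(a : ℂ) * w) := by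
  simp [auxF, max_eq_left hw]

lemma auxF_of_nonpos {a w : ℝ} (hw : w ≤ 0) : auxF a w = 0 := by
  simp [auxF, max_eq_right hw]

lemma auxF_continuous (a : ℝ) : Continuous (auxF a) := by
  unfold auxF; fun_prop

lemma auxF_integrable {a : ℝ} (ha : 0 < a) : Integrable (auxF a) := by
  have hre : 0 < ((a : ℂ)).re := by simpa using ha
  have h1 : IntegrableOn (auxF a) (Iic 0) :=
    (integrableOn_zero (ε' := ℂ)).congr_fun (fun w hw => (auxF_of_nonpos hw).symm)
      measurableSet_Iic
  have h2 : IntegrableOn (auxF a) (Ioi 0) :=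
    (aux_integrableOn_mul_cexp hre).congr_fun (fun w hw => (auxF_of_nonneg hw.le).symm)
      measurableSet_Ioi
  rw [← integrableOn_univ, ← Set.Iic_union_Ioi (a := (0:ℝ))]
  exact h1.union h2

lemma auxF_fourier {a : ℝ} (ha : 0 < a) (ξ : ℝ) :
    𝓕 (auxF a) ξ = (((a : ℂ) + 2 * π * ξ * Complex.I)⁻¹) ^ 2 := by
  set b : ℂ := (a : ℂ) + 2 * π * ξ * Complex.I with hbdef
  have hbre : 0 < b.re := by simp [hbdef, ha]
  rw [Real.fourier_real_eq_integral_exp_smul]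
  have hzero : ∀ w ∉ Ioi (0:ℝ),
      Complex.exp (↑(-2 * π * w * ξ) * Complex.I) • auxF a w = 0 := by
    intro w hw
    rw [auxF_of_nonpos (by simpa using hw)]
    simp
  rw [← setIntegral_eq_integral_of_forall_compl_eq_zero hzero]
  have hcongr : ∀ w ∈ Ioi (0:ℝ),
      Complex.exp (↑(-2 * π * w * ξ) * Complex.I) • auxF a w
        = (w : ℂ) * Complex.exp (-b * w) := by
    intro w hw
    rw [auxF_of_nonneg hw.le, smul_eq_mul]
    rw [← mul_assoc, mul_comm (Complex.exp _) ((w:ℂ)), mul_assoc, ← Complex.exp_add]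
    congr 2
    push_cast [hbdef]
    ring
  rw [setIntegral_congr_fun measurableSet_Ioi hcongr, aux_integral_mul_cexp hbre]

lemma auxF_fourier_integrable {a : ℝ} (ha : 0 < a) : Integrable (𝓕 (auxF a)) := by
  have h2π : (0:ℝ) < 2 * π := by positivity
  have hmaj := (aux_integrable_inv_sq_add ha).comp_mul_right' (R := 2 * π) h2π.ne'
  refine Integrable.mono' hmaj ?_ (Filter.Eventually.of_forall fun ξ => ?_)
  · refine (Continuous.aestronglyMeasurable ?_).congr
      (Filter.Eventually.of_forall fun ξ => (auxF_fourier ha ξ).symm)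
    have hne : ∀ ξ : ℝ, ((a : ℂ) + 2 * π * ξ * Complex.I) ≠ 0 := by
      intro ξ h
      have := congrArg Complex.re h
      simp at this
      exact ha.ne' this
    have hc : Continuous fun ξ : ℝ => (a : ℂ) + 2 * π * ξ * Complex.I := by fun_prop
    exact (hc.inv₀ hne).pow 2
  · rw [auxF_fourier ha ξ]
    have : ‖(((a : ℂ) + 2 * π * ξ * Complex.I)⁻¹) ^ 2‖
        = ((a ^ 2 + (ξ * (2 * π)) ^ 2))⁻¹ := by
      rw [norm_pow, norm_inv, inv_pow, Complex.sq_norm]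
      have h2 : (a:ℂ) + 2 * π * ξ * Complex.I = (a:ℂ) + ((2 * π * ξ : ℝ) : ℂ) * Complex.I := by
        push_cast; ring
      rw [h2, Complex.normSq_add_mul_I]
      congr 1
      ring
    rw [this]

lemma aux_ne_zero {a : ℝ} (ha : 0 < a) (t : ℝ) : ((a : ℂ) + t * Complex.I) ≠ 0 := by
  intro h
  have := congrArg Complex.re h
  simp at this
  exact ha.ne' this

lemma aux_kernel_norm {a : ℝ} (ha : 0 < a) (v t : ℝ) :
    ‖Complex.exp ((v : ℂ) * t * Complex.I) / ((a : ℂ) + t * Complex.I) ^ 2‖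
      = (a ^ 2 + t ^ 2)⁻¹ := by
  rw [norm_div, norm_pow, Complex.norm_exp,
    Complex.sq_norm, Complex.normSq_add_mul_I]
  have : ((v : ℂ) * t * Complex.I).re = 0 := by simp
  rw [this, Real.exp_zero, one_div]

lemma aux_kernel_integrable {a : ℝ} (ha : 0 < a) (v : ℝ) :
    Integrable (fun t : ℝ => Complex.exp ((v : ℂ) * t * Complex.I)
      / ((a : ℂ) + t * Complex.I) ^ 2) := by
  refine (aux_integrable_inv_sq_add ha).mono' ?_
    (Filter.Eventually.of_forall fun t => (aux_kernel_norm ha v t).le)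
  have hc : Continuous fun t : ℝ => (a : ℂ) + t * Complex.I := by fun_prop
  exact (Continuous.div (by fun_prop) (hc.pow 2)
    (fun t => pow_ne_zero 2 (aux_ne_zero ha t))).aestronglyMeasurable

lemma aux_kernel {a : ℝ} (ha : 0 < a) (v : ℝ) :
    ∫ t : ℝ, Complex.exp ((v : ℂ) * t * Complex.I) / ((a : ℂ) + t * Complex.I) ^ 2
      = 2 * π * auxF a v := by
  set h : ℝ → ℂ := fun t => Complex.exp ((v : ℂ) * t * Complex.I)
      / ((a : ℂ) + t * Complex.I) ^ 2 with hh
  have hinv : 𝓕⁻ (𝓕 (auxF a)) v = auxF a v :=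
    (auxF_integrable ha).fourierInv_fourier_eq (auxF_fourier_integrable ha)
      ((auxF_continuous a).continuousAt)
  rw [fourierInv_eq_fourier_neg,
    Real.fourier_real_eq_integral_exp_smul] at hinv
  have hstep : ∀ ξ : ℝ,
      Complex.exp (↑(-2 * π * ξ * (-v)) * Complex.I) • 𝓕 (auxF a) ξ = h (2 * π * ξ) := by
    intro ξ
    rw [auxF_fourier ha ξ, smul_eq_mul, hh]
    simp only []
    rw [div_eq_mul_inv, ← inv_pow]
    congr 2
    · push_cast; ring
    · push_cast; ring
  simp_rw [hstep] at hinv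
  have h2π : (0:ℝ) < 2 * π := by positivity
  have hcomp := MeasureTheory.Measure.integral_comp_mul_left h (2 * π)
  rw [hinv, abs_of_pos (inv_pos.mpr h2π)] at hcomp
  rw [hcomp, Complex.real_smul, ← mul_assoc]
  have : (2 * (π:ℂ)) * (((2 * π : ℝ)⁻¹ : ℝ) : ℂ) = 1 := by
    push_cast
    rw [mul_inv_cancel₀]
    simp [Real.pi_ne_zero]
  rw [this, one_mul]


/-- For every integer `k ≥ 1`, every real `c > k` and every real `x > 0`,
the vertical-line contour integral `(1/2πi)∫_{(c)} Γ(s) x^{k-s} ds/(s-k)²`, i.e.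
`(1/2π)∫_ℝ Γ(c+it) x^{k-c-it}/(c+it-k)² dt`, converges and equals
`∫_x^∞ e^{-ξ} ξ^{k-1} (log ξ - log x) dξ`. -/
theorem vertical_line_integral_sq_eq_incomplete_gamma_log
    (k : ℕ) (hk : 1 ≤ k) (c : ℝ) (hc : (k : ℝ) < c) (x : ℝ) (hx : 0 < x) :
    Integrable (fun t : ℝ =>
      Complex.Gamma (c + t * Complex.I) *
        (x : ℂ) ^ ((k : ℂ) - (c + t * Complex.I)) / ((c + t * Complex.I) - k) ^ 2) ∧
    (1 / (2 * π) : ℂ) * ∫ t : ℝ,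
        Complex.Gamma (c + t * Complex.I) *
          (x : ℂ) ^ ((k : ℂ) - (c + t * Complex.I)) / ((c + t * Complex.I) - k) ^ 2
      = ((∫ ξ in Set.Ioi x,
            Real.exp (-ξ) * ξ ^ (k - 1) * (Real.log ξ - Real.log x) : ℝ) : ℂ) := by

  have hc0 : (0 : ℝ) < c := lt_of_le_of_lt (Nat.cast_nonneg k) hc
  set a : ℝ := c - k with ha_def
  have ha : 0 < a := sub_pos.mpr hc
  have hsub : ∀ t : ℝ, ((c : ℂ) + t * Complex.I) - (k : ℂ) = (a : ℂ) + t * Complex.I := by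
    intro t; rw [ha_def]; push_cast; ring
  have hre : ∀ t : ℝ, 0 < ((c : ℂ) + t * Complex.I).re := by intro t; simpa using hc0
  -- norm of the x-power / denominator part
  have hnormX : ∀ t : ℝ,
      ‖(x : ℂ) ^ ((k : ℂ) - ((c : ℂ) + t * Complex.I)) / (((c : ℂ) + t * Complex.I) - k) ^ 2‖
        = x ^ ((k : ℝ) - c) * (a ^ 2 + t ^ 2)⁻¹ := by
    intro t
    rw [hsub t, norm_div, norm_pow,
      Complex.norm_cpow_eq_rpow_re_of_pos hx, Complex.sq_norm, Complex.normSq_add_mul_I,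
      div_eq_mul_inv]
    congr 2
    simp
  -- continuity of the x-power / denominator part
  have hXcont : Continuous fun t : ℝ =>
      (x : ℂ) ^ ((k : ℂ) - ((c : ℂ) + t * Complex.I)) / (((c : ℂ) + t * Complex.I) - k) ^ 2 := by
    refine Continuous.div ?_ (by fun_prop) ?_
    · refine continuous_const.cpow (by fun_prop) fun t => ?_
      exact Or.inl (by simpa using hx)
    · intro t
      rw [hsub t]
      exact pow_ne_zero 2 (aux_ne_zero ha t)
  have hGcont : Continuous fun t : ℝ => Complex.Gamma ((c : ℂ) + t * Complex.I) := by
    rw [continuous_iff_continuousAt]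
    intro t
    refine (Complex.differentiableAt_Gamma _ fun m => ?_).continuousAt.comp (by fun_prop)
    intro h
    have := congrArg Complex.re h
    simp at this
    nlinarith [Nat.cast_nonneg (α := ℝ) m]
  have hInt : Integrable (fun t : ℝ =>
      Complex.Gamma (c + t * Complex.I) *
        (x : ℂ) ^ ((k : ℂ) - (c + t * Complex.I)) / ((c + t * Complex.I) - k) ^ 2) := by
    refine Integrable.mono'
      ((aux_integrable_inv_sq_add ha).const_mul (Real.Gamma c * x ^ ((k : ℝ) - c)))
      ?_ (Filter.Eventually.of_forall fun t => ?_)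
    · have heq : (fun t : ℝ =>
          Complex.Gamma (c + t * Complex.I) *
            (x : ℂ) ^ ((k : ℂ) - (c + t * Complex.I)) / ((c + t * Complex.I) - k) ^ 2)
          = fun t : ℝ => Complex.Gamma (c + t * Complex.I) *
            ((x : ℂ) ^ ((k : ℂ) - (c + t * Complex.I)) / ((c + t * Complex.I) - k) ^ 2) := by
        funext t; rw [mul_div_assoc]
      rw [heq]
      exact (hGcont.mul hXcont).aestronglyMeasurable
    · rw [mul_div_assoc, norm_mul, hnormX t]
      refine le_trans (mul_le_mul_of_nonneg_right (aux_gamma_bound hc0 t) (by positivity)) ?_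
      rw [← mul_assoc]
  refine ⟨hInt, ?_⟩
  set g : ℝ → ℝ := fun u => rexp (-u) * u ^ (k - 1) * (Real.log u - Real.log x) with hg
  set P : ℝ → ℝ → ℂ := fun t u =>
    (↑(rexp (-u)) * (u : ℂ) ^ ((c : ℂ) + t * Complex.I - 1)) *
      ((x : ℂ) ^ ((k : ℂ) - ((c : ℂ) + t * Complex.I)) / (((c : ℂ) + t * Complex.I) - k) ^ 2)
    with hP
  -- Fubini integrability
  have hPint : Integrable (Function.uncurry P) (volume.prod (volume.restrict (Ioi 0))) := by
    refine Integrable.mono'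
      (((aux_integrable_inv_sq_add ha).const_mul (x ^ ((k : ℝ) - c))).mul_prod
        (Real.GammaIntegral_convergent hc0)) ?_ ?_
    · apply Measurable.aestronglyMeasurable
      refine Measurable.mul (Measurable.mul ?_ ?_) ?_
      · fun_prop
      · exact (Complex.measurable_ofReal.comp measurable_snd).pow (by fun_prop)
      · exact hXcont.measurable.comp measurable_fst
    · have hmeq : volume.prod (volume.restrict (Ioi (0:ℝ)))
          = ((volume : Measure ℝ).prod (volume : Measure ℝ)).restrict (Set.univ ×ˢ Ioi 0) := by
        have := Measure.prod_restrict (μ := (volume : Measure ℝ)) (ν := (volume : Measure ℝ))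
          Set.univ (Ioi (0:ℝ))
        rwa [Measure.restrict_univ] at this
      rw [hmeq, ae_restrict_iff' (MeasurableSet.univ.prod measurableSet_Ioi)]
      refine Filter.Eventually.of_forall fun p hp => ?_
      have hu : 0 < p.2 := (Set.mem_prod.mp hp).2
      show ‖P p.1 p.2‖ ≤ _
      rw [hP]
      simp only []
      rw [norm_mul, norm_mul, hnormX p.1]
      have h1 : ‖((rexp (-p.2) : ℝ) : ℂ)‖ = rexp (-p.2) := by
        rw [Complex.norm_real, Real.norm_eq_abs, abs_of_pos (Real.exp_pos _)]
      have h2 : ‖(p.2 : ℂ) ^ ((c : ℂ) + p.1 * Complex.I - 1)‖ = p.2 ^ (c - 1) := by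
        rw [Complex.norm_cpow_eq_rpow_re_of_pos hu]
        congr 1
        simp
      rw [h1, h2]
      exact le_of_eq (by ring)
  -- the inner integral
  have hinner : ∀ u ∈ Ioi (0:ℝ), (∫ t : ℝ, P t u)
      = (2 * π : ℂ) * (Ioi x).indicator (fun u => ((g u : ℝ) : ℂ)) u := by
    intro u hu
    rw [Set.mem_Ioi] at hu
    set v : ℝ := Real.log u - Real.log x with hv
    have hu0 : (u : ℂ) ≠ 0 := Complex.ofReal_ne_zero.mpr hu.ne'
    have hx0 : (x : ℂ) ≠ 0 := Complex.ofReal_ne_zero.mpr hx.ne'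
    have hrw : ∀ t : ℝ, P t u
        = ↑(rexp (-u) * u ^ (k - 1) * rexp (v * a)) *
          (Complex.exp ((v : ℂ) * t * Complex.I) / ((a : ℂ) + t * Complex.I) ^ 2) := by
      intro t
      rw [hP]
      simp only []
      rw [hsub t, Complex.cpow_def_of_ne_zero hu0, Complex.cpow_def_of_ne_zero hx0,
        ← Complex.ofReal_log hu.le, ← Complex.ofReal_log hx.le]
      rw [div_eq_mul_inv, div_eq_mul_inv, ← mul_assoc, ← mul_assoc]
      congr 1
      -- ↑(rexp (-u)) * cexp E1 * cexp E2 = ↑(rexp(-u) * u^(k-1) * rexp (v*a)) * cexp E3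
      have hupow : ((u ^ (k - 1) : ℝ) : ℂ) = Complex.exp (↑(Real.log u) * ((k : ℂ) - 1)) := by
        have : ((u ^ (k - 1) : ℝ) : ℂ) = ((u : ℂ)) ^ ((k : ℕ) - 1) := by push_cast; ring
        rw [this, ← Complex.exp_log hu0, ← Complex.exp_nat_mul, ← Complex.ofReal_log hu.le]
        congr 1
        have : ((k - 1 : ℕ) : ℂ) = (k : ℂ) - 1 := by
          push_cast [Nat.cast_sub hk]; ring
        rw [mul_comm, this]
      have hexpva : ((rexp (v * a) : ℝ) : ℂ) = Complex.exp ((v * a : ℝ) : ℂ) :=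
        Complex.ofReal_exp _
      rw [Complex.ofReal_mul, Complex.ofReal_mul, hupow, hexpva, mul_assoc, mul_assoc,
        mul_assoc, ← Complex.exp_add, ← Complex.exp_add, ← Complex.exp_add]
      congr 1
      rw [hv, ha_def]
      push_cast
      ring
    rw [integral_congr_ae (Filter.Eventually.of_forall hrw), MeasureTheory.integral_const_mul,
      aux_kernel ha v]
    by_cases hxu : x < u
    · have hv0 : 0 ≤ v := sub_nonneg.mpr (Real.log_le_log hx hxu.le)
      rw [auxF_of_nonneg hv0, Set.indicator_of_mem (Set.mem_Ioi.mpr hxu)]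
      have hcexp : Complex.exp (-(a : ℂ) * (v : ℂ)) = ((rexp (-(a * v)) : ℝ) : ℂ) := by
        rw [Complex.ofReal_exp]
        congr 1
        push_cast
        ring
      rw [hcexp]
      have h1 : rexp (v * a) * rexp (-(a * v)) = 1 := by
        rw [← Real.exp_add, show v * a + -(a * v) = 0 by ring, Real.exp_zero]
      have hgid : rexp (-u) * u ^ (k - 1) * rexp (v * a) * (v * rexp (-(a * v))) = g u := by
        calc rexp (-u) * u ^ (k - 1) * rexp (v * a) * (v * rexp (-(a * v)))
            = rexp (-u) * u ^ (k - 1) * v * (rexp (v * a) * rexp (-(a * v))) := by ring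
          _ = g u := by rw [h1, hg, hv]; ring
      rw [← hgid]
      push_cast
      ring
    · have hv0 : v ≤ 0 := sub_nonpos.mpr (Real.log_le_log hu (not_lt.mp hxu))
      rw [auxF_of_nonpos hv0, Set.indicator_of_notMem (by simpa using hxu)]
      ring
  -- assemble
  have key : (∫ t : ℝ, Complex.Gamma (c + t * Complex.I) *
        (x : ℂ) ^ ((k : ℂ) - (c + t * Complex.I)) / ((c + t * Complex.I) - k) ^ 2)
      = (2 * π : ℂ) * ((∫ u in Ioi x, g u : ℝ) : ℂ) := by
    have hstep1 : ∀ t : ℝ, Complex.Gamma (c + t * Complex.I) *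
        (x : ℂ) ^ ((k : ℂ) - (c + t * Complex.I)) / ((c + t * Complex.I) - k) ^ 2
        = ∫ u in Ioi (0:ℝ), P t u := by
      intro t
      rw [mul_div_assoc, Complex.Gamma_eq_integral (hre t)]
      have : Complex.GammaIntegral ((c : ℂ) + t * Complex.I)
          = ∫ u in Ioi (0:ℝ), ↑(rexp (-u)) * (u : ℂ) ^ ((c : ℂ) + t * Complex.I - 1) := rfl
      rw [this, ← integral_mul_const]
    calc (∫ t : ℝ, Complex.Gamma (c + t * Complex.I) *
        (x : ℂ) ^ ((k : ℂ) - (c + t * Complex.I)) / ((c + t * Complex.I) - k) ^ 2)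
        = ∫ t : ℝ, ∫ u in Ioi (0:ℝ), P t u := integral_congr_ae
          (Filter.Eventually.of_forall hstep1)
      _ = ∫ u in Ioi (0:ℝ), ∫ t : ℝ, P t u := integral_integral_swap hPint
      _ = ∫ u in Ioi (0:ℝ), (2 * π : ℂ) * (Ioi x).indicator (fun u => ((g u : ℝ) : ℂ)) u :=
          setIntegral_congr_fun measurableSet_Ioi hinner
      _ = (2 * π : ℂ) * ∫ u in Ioi (0:ℝ), (Ioi x).indicator (fun u => ((g u : ℝ) : ℂ)) u :=
          MeasureTheory.integral_const_mul _ _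
      _ = (2 * π : ℂ) * ∫ u in Ioi x, ((g u : ℝ) : ℂ) := by
          rw [setIntegral_indicator measurableSet_Ioi, Set.Ioi_inter_Ioi,
            sup_eq_right.mpr hx.le]
      _ = (2 * π : ℂ) * ((∫ u in Ioi x, g u : ℝ) : ℂ) := by
          congr 1
          exact integral_ofReal (𝕜 := ℂ)
  rw [key, ← mul_assoc]
  have hpi : (1 / (2 * (π : ℂ))) * (2 * π) = 1 := by
    rw [one_div, inv_mul_cancel₀]
    simp [Real.pi_ne_zero, Complex.ext_iff]
  rw [hpi, one_mul]
end

section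
/- Let k > 0 be real and let F : ℂ → ℂ be an entire function satisfying the functional equation F(s) = F(2k−s) for all s ∈ ℂ. Assume that t ↦ F(σ+it) is integrable on ℝ for σ = 0 and σ = 2k, and that sup_{0≤σ≤2k} |F(σ+it)| → 0 as |t| → ∞. Then (1/2πi)∫_{(2k)} F(s) ds/(s−k), i.e. (1/2π)∫_{-∞}^{∞} F(2k+it)/(k+it) dt, equals F(k)/2. -/
open MeasureTheory Complex Real Filter

/-- Let `k > 0` be real and `F : ℂ → ℂ` entire with `F(s) = F(2k-s)` for all
`s`. If `t ↦ F(σ+it)` is integrable on `ℝ` for `σ = 0` and `σ = 2k`, and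
`sup_{0 ≤ σ ≤ 2k} |F(σ+it)| → 0` as `|t| → ∞`, then
`(1/2πi)∫_{(2k)} F(s) ds/(s-k)`, i.e. `(1/2π)∫_ℝ F(2k+it)/(k+it) dt`, equals `F(k)/2`. -/
theorem cauchy_formula_central_value
    (k : ℝ) (hk : 0 < k) (F : ℂ → ℂ) (hF : Differentiable ℂ F)
    (hfe : ∀ s : ℂ, F s = F (2 * k - s))
    (hint0 : Integrable (fun t : ℝ => F ((0 : ℝ) + t * Complex.I)))
    (hint2k : Integrable (fun t : ℝ => F ((2 * k : ℝ) + t * Complex.I)))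
    (hdecay : Tendsto (fun t : ℝ => ⨆ σ ∈ Set.Icc (0 : ℝ) (2 * k),
        ‖F (σ + t * Complex.I)‖) (cocompact ℝ) (nhds 0)) :
    (1 / (2 * π) : ℂ) * ∫ t : ℝ, F ((2 * k : ℝ) + t * Complex.I) / ((k : ℂ) + t * Complex.I)
      = F k / 2 := by
  have hkne : (k:ℂ) ≠ 0 := Complex.ofReal_ne_zero.mpr hk.ne'
  set g : ℂ → ℂ := dslope F (k : ℂ) with hgdef
  have hg : Differentiable ℂ g := by
    rw [← differentiableOn_univ] at hF ⊢
    exact (Complex.differentiableOn_dslope (by simp)).mpr hF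
  have hgval : ∀ s : ℂ, s ≠ (k:ℂ) → g s = (F s - F k) / (s - k) := by
    intro s hs
    rw [hgdef, dslope_of_ne _ hs, slope_def_field]
  have hz : ∀ t : ℝ, ((k:ℂ) + t * Complex.I) ≠ 0 := by
    intro t h
    have := congrArg Complex.re h
    simp at this
    exact hk.ne' this
  have hcontinv : Continuous (fun t : ℝ => ((k:ℂ) + t * Complex.I)⁻¹) :=
    Continuous.inv₀ (continuous_const.add (Complex.continuous_ofReal.mul continuous_const)) hz
  have hline2k : ∀ t : ℝ, ((2*k:ℝ) + t * Complex.I : ℂ) ≠ (k:ℂ) := by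
    intro t h
    have := congrArg Complex.re h
    simp at this
    nlinarith
  have hline0 : ∀ t : ℝ, (((0:ℝ):ℂ) + t * Complex.I : ℂ) ≠ (k:ℂ) := by
    intro t h
    have := congrArg Complex.re h
    simp at this
    exact hk.ne' this.symm
  set φ : ℝ → ℂ := fun t => F ((2 * k : ℝ) + t * Complex.I) / ((k : ℂ) + t * Complex.I) with hφdef
  set A : ℝ → ℂ := fun T => ∫ x : ℝ in (0:ℝ)..(2*k), g (x + (-T) * Complex.I) with hAdef
  set B : ℝ → ℂ := fun T => ∫ x : ℝ in (0:ℝ)..(2*k), g (x + T * Complex.I) with hBdef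
  set C : ℝ → ℂ := fun T => ∫ y : ℝ in (-T)..T, g ((2*k:ℝ) + y * Complex.I) with hCdef
  set M : ℝ → ℝ := fun t => ⨆ σ ∈ Set.Icc (0 : ℝ) (2 * k),
      ‖F (σ + t * Complex.I)‖ with hMdef
  -- integrability of φ
  have hφint : Integrable φ := by
    have hb : ∀ t : ℝ, ‖((k:ℂ) + t * Complex.I)⁻¹‖ ≤ k⁻¹ := by
      intro t
      rw [norm_inv]
      refine inv_anti₀ hk ?_
      calc k = |((k:ℂ) + t * Complex.I).re| := by simp [abs_of_pos hk]
        _ ≤ ‖(k:ℂ) + t * Complex.I‖ := Complex.abs_re_le_norm _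
    have : Integrable (fun t : ℝ => ((k:ℂ) + t * Complex.I)⁻¹ * F ((2*k:ℝ) + t * Complex.I)) :=
      hint2k.bdd_mul (c := k⁻¹) hcontinv.aestronglyMeasurable (Filter.Eventually.of_forall hb)
    refine this.congr (Filter.Eventually.of_forall fun t => ?_)
    rw [hφdef]
    simp [div_eq_mul_inv, mul_comm]
  -- symmetry
  have hsymm : ∀ T : ℝ, (∫ y : ℝ in (-T)..T, g (((0:ℝ):ℂ) + y * Complex.I)) = - C T := by
    intro T
    have h1 : ∀ t : ℝ, g (((0:ℝ):ℂ) + t * Complex.I)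
        = - (fun s : ℝ => g ((2*k:ℝ) + s * Complex.I)) (-t) := by
      intro t
      simp only
      rw [hgval _ (hline0 t), hgval _ (hline2k (-t))]
      have hFeq : F (((0:ℝ):ℂ) + t * Complex.I) = F (((2*k:ℝ):ℂ) + (-t : ℝ) * Complex.I) := by
        rw [hfe]
        norm_num
        ring_nf
      rw [hFeq, show (((2*k:ℝ):ℂ) + (-t:ℝ) * Complex.I - k) = -((((0:ℝ):ℂ) + t * Complex.I) - k) by
        push_cast; ring, div_neg, neg_neg]
    calc (∫ y : ℝ in (-T)..T, g (((0:ℝ):ℂ) + y * Complex.I))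
        = ∫ y : ℝ in (-T)..T, - (fun s : ℝ => g ((2*k:ℝ) + s * Complex.I)) (-y) :=
          intervalIntegral.integral_congr (fun y _ => h1 y)
      _ = - ∫ y : ℝ in (-T)..T, (fun s : ℝ => g ((2*k:ℝ) + s * Complex.I)) (-y) :=
          intervalIntegral.integral_neg
      _ = - C T := by
          rw [intervalIntegral.integral_comp_neg (fun s : ℝ => g ((2*k:ℝ) + s * Complex.I))]
          simp [hCdef]
  -- rectangle theorem
  have hrect : ∀ T : ℝ, C T = (2 * Complex.I)⁻¹ * (B T - A T) := by
    intro T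
    have h0 := Complex.integral_boundary_rect_eq_zero_of_differentiableOn g
      (⟨0, -T⟩ : ℂ) (⟨2*k, T⟩ : ℂ) hg.differentiableOn
    have h0' : A T - B T + Complex.I • C T -
        Complex.I • (∫ y : ℝ in (-T)..T, g (((0:ℝ):ℂ) + y * Complex.I)) = 0 := by
      simpa [hAdef, hBdef, hCdef] using h0
    rw [hsymm T] at h0'
    have hI : (2 * Complex.I) ≠ 0 := by simp [Complex.I_ne_zero]
    rw [inv_mul_eq_div, eq_div_iff hI]
    simp only [smul_eq_mul, mul_neg, sub_neg_eq_add] at h0'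
    linear_combination h0'
  -- sup bound
  have hMle : ∀ (t x : ℝ), x ∈ Set.Icc (0:ℝ) (2*k) →
      ‖F (x + t * Complex.I)‖ ≤ M t := by
    intro t x hx
    have hc : Continuous (fun σ : ℝ => ‖F ((σ:ℂ) + t * Complex.I)‖) :=
      continuous_norm.comp (hF.continuous.comp
        (Complex.continuous_ofReal.add continuous_const))
    obtain ⟨Cb, hCb⟩ := (isCompact_Icc (a := (0:ℝ)) (b := 2*k)).bddAbove_image hc.continuousOn
    have hb : BddAbove (Set.range fun σ : ℝ =>
        ⨆ _ : σ ∈ Set.Icc (0:ℝ) (2*k), ‖F (σ + t * Complex.I)‖) := by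
      refine ⟨max Cb 0, ?_⟩
      rintro y ⟨σ, rfl⟩
      show (⨆ _ : σ ∈ Set.Icc (0:ℝ) (2*k), ‖F ((σ:ℂ) + t * Complex.I)‖) ≤ max Cb 0
      by_cases hσ : σ ∈ Set.Icc (0:ℝ) (2*k)
      · rw [ciSup_pos (f := fun _ => ‖F ((σ:ℂ) + t * Complex.I)‖) hσ]
        exact le_max_of_le_left (hCb (Set.mem_image_of_mem _ hσ))
      · simp [hσ]
    calc ‖F (x + t * Complex.I)‖
        = ⨆ _ : x ∈ Set.Icc (0:ℝ) (2*k), ‖F (x + t * Complex.I)‖ :=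
          (ciSup_pos (f := fun _ => ‖F ((x:ℂ) + t * Complex.I)‖) hx).symm
      _ ≤ M t := le_ciSup hb x
  have hgbound : ∀ τ : ℝ, τ ≠ 0 → ∀ x ∈ Set.uIoc (0:ℝ) (2*k),
      ‖g ((x:ℂ) + τ * Complex.I)‖ ≤ (M τ + ‖F k‖) / |τ| := by
    intro τ hτ x hx
    have hxI : x ∈ Set.Icc (0:ℝ) (2*k) := by
      rw [Set.uIoc_of_le (by linarith)] at hx
      exact Set.Ioc_subset_Icc_self hx
    have hne : ((x:ℂ) + τ * Complex.I) ≠ (k:ℂ) := by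
      intro h
      have := congrArg Complex.im h
      simp at this
      exact hτ this
    have hM0 : (0:ℝ) ≤ M τ := Real.iSup_nonneg fun σ => Real.iSup_nonneg fun _ => (norm_nonneg _)
    rw [hgval _ hne, norm_div]
    refine div_le_div₀ (add_nonneg hM0 (norm_nonneg _)) ?_ (by simpa [abs_pos] using hτ) ?_
    · calc ‖F ((x:ℂ) + τ * Complex.I) - F k‖ ≤ ‖F ((x:ℂ) + τ * Complex.I)‖ + ‖F k‖ :=
        norm_sub_le _ _
      _ ≤ M τ + ‖F k‖ := by
        have := hMle τ x hxI
        simpa using add_le_add_right this (‖F k‖)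
    · calc |τ| = |((x:ℂ) + τ * Complex.I - k).im| := by simp
        _ ≤ ‖(x:ℂ) + τ * Complex.I - k‖ := Complex.abs_im_le_norm _
  have hMtop : Tendsto M atTop (nhds 0) := by
    refine hdecay.mono_left ?_
    rw [cocompact_eq_atBot_atTop]
    exact le_sup_right
  have hMbot : Tendsto (fun T : ℝ => M (-T)) atTop (nhds 0) := by
    refine hdecay.comp ?_
    rw [cocompact_eq_atBot_atTop]
    exact tendsto_neg_atTop_atBot.mono_right le_sup_left
  -- B - A tends to 0
  have hBA : Tendsto (fun T => B T - A T) atTop (nhds (0:ℂ)) := by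
    rw [tendsto_zero_iff_norm_tendsto_zero]
    have hb : ∀ᶠ T in atTop, ‖B T - A T‖ ≤
        ((M T + ‖F k‖) / T) * |2*k - 0| +
        ((M (-T) + ‖F k‖) / T) * |2*k - 0| := by
      filter_upwards [eventually_gt_atTop (0:ℝ)] with T hT
      have hBb : ‖B T‖ ≤ ((M T + ‖F k‖) / |T|) * |2*k - 0| :=
        intervalIntegral.norm_integral_le_of_norm_le_const
          (fun x hx => hgbound T hT.ne' x hx)
      have hAb : ‖A T‖ ≤ ((M (-T) + ‖F k‖) / |(-T)|) * |2*k - 0| :=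
        intervalIntegral.norm_integral_le_of_norm_le_const
          (fun x hx => by
            have := hgbound (-T) (by linarith) x hx
            push_cast at this
            exact this)
      rw [abs_of_pos hT] at hBb
      rw [abs_neg, abs_of_pos hT] at hAb
      calc ‖B T - A T‖ ≤ ‖B T‖ + ‖A T‖ := norm_sub_le _ _
        _ ≤ _ := add_le_add hBb hAb
    refine squeeze_zero' (Filter.Eventually.of_forall fun T => norm_nonneg _) hb ?_
    have h1 : Tendsto (fun T : ℝ => ((M T + ‖F k‖) / T) * |2*k - 0|)
        atTop (nhds 0) := by
      have := ((hMtop.add_const (‖F k‖)).mul tendsto_inv_atTop_zero).mul_const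
        (|2*k - 0|)
      simpa [div_eq_mul_inv] using this
    have h2 : Tendsto (fun T : ℝ => ((M (-T) + ‖F k‖) / T) * |2*k - 0|)
        atTop (nhds 0) := by
      have := ((hMbot.add_const (‖F k‖)).mul tendsto_inv_atTop_zero).mul_const
        (|2*k - 0|)
      simpa [div_eq_mul_inv] using this
    simpa using h1.add h2
  have hCz : Tendsto C atTop (nhds (0:ℂ)) := by
    have := hBA.const_mul ((2 * Complex.I)⁻¹)
    simp only [mul_zero] at this
    exact this.congr (fun T => (hrect T).symm)
  -- explicit value of the Cauchy kernel integral
  have hQval : ∀ T : ℝ, (∫ t in (-T)..T, ((k:ℂ) + t * Complex.I)⁻¹)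
      = 2 * (Real.arctan (T/k) : ℂ) := by
    intro T
    have hprim : ∀ t : ℝ, HasDerivAt (fun t : ℝ =>
        ((Real.arctan (t/k) : ℂ)) - Complex.I/2 * (Real.log (k^2 + t^2) : ℂ))
        (((k:ℂ) + t * Complex.I)⁻¹) t := by
      intro t
      have hkt : (0:ℝ) < k^2 + t^2 := by positivity
      have h1 : HasDerivAt (fun t : ℝ => Real.arctan (t/k)) ((1/(1+(t/k)^2)) * (1/k)) t := by
        simpa [Function.comp_def] using (Real.hasDerivAt_arctan (t/k)).comp t ((hasDerivAt_id t).div_const k)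
      have h2 : HasDerivAt (fun t : ℝ => Real.log (k^2 + t^2)) ((k^2+t^2)⁻¹ * (2*t)) t := by
        have : HasDerivAt (fun t : ℝ => k^2 + t^2) (2*t) t := by
          simpa using ((hasDerivAt_pow 2 t).const_add (k^2))
        exact (Real.hasDerivAt_log hkt.ne').comp t this
      have h3 := (h1.ofReal_comp).sub ((h2.ofReal_comp).const_mul (Complex.I/2))
      refine h3.congr_deriv ?_
      have hne : ((k:ℂ)^2 + (t:ℂ)^2) ≠ 0 := by
        simpa using Complex.ofReal_ne_zero.mpr hkt.ne'
      have hzt : ((k:ℂ) + t * Complex.I) ≠ 0 := hz t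
      rw [eq_comm]
      push_cast
      field_simp
      ring_nf
      simp [Complex.I_sq]
    rw [intervalIntegral.integral_eq_sub_of_hasDerivAt (fun t _ => hprim t)
      (hcontinv.intervalIntegrable _ _)]
    have hd : ((-T)/k) = -(T/k) := by ring
    rw [hd, Real.arctan_neg]
    push_cast
    ring
  -- decomposition of C
  have hdecomp : ∀ T : ℝ, C T = (∫ t in (-T)..T, φ t)
      - F k * ∫ t in (-T)..T, ((k:ℂ) + t * Complex.I)⁻¹ := by
    intro T
    have hpt : ∀ t : ℝ, g ((2*k:ℝ) + t * Complex.I)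
        = φ t - F k * ((k:ℂ) + t * Complex.I)⁻¹ := by
      intro t
      rw [hgval _ (hline2k t), hφdef]
      have he : (((2*k:ℝ):ℂ) + t * Complex.I - k) = (k:ℂ) + t * Complex.I := by
        push_cast; ring
      rw [he, sub_div, div_eq_mul_inv (F k)]
    have hφc : Continuous φ := by
      rw [hφdef]
      exact (hF.continuous.comp (continuous_const.add
        (Complex.continuous_ofReal.mul continuous_const))).div
        (continuous_const.add (Complex.continuous_ofReal.mul continuous_const)) hz
    rw [hCdef]
    simp only
    rw [intervalIntegral.integral_congr (fun t _ => hpt t),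
      intervalIntegral.integral_sub (hφc.intervalIntegrable _ _)
        ((hcontinv.intervalIntegrable _ _).const_mul _),
      intervalIntegral.integral_const_mul]
  have hP : Tendsto (fun T : ℝ => ∫ t in (-T)..T, φ t) atTop (nhds (∫ t : ℝ, φ t)) :=
    intervalIntegral_tendsto_integral hφint tendsto_neg_atTop_atBot tendsto_id
  have hQ : Tendsto (fun T : ℝ => ∫ t in (-T)..T, ((k:ℂ) + t * Complex.I)⁻¹)
      atTop (nhds ((π:ℂ))) := by
    have harct : Tendsto (fun T : ℝ => Real.arctan (T/k)) atTop (nhds (π/2)) := by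
      refine (Real.tendsto_arctan_atTop.mono_right nhdsWithin_le_nhds).comp ?_
      exact tendsto_id.atTop_div_const hk
    have h4 : Tendsto (fun T : ℝ => 2 * (Real.arctan (T/k) : ℂ)) atTop
        (nhds (2 * ((π/2 : ℝ):ℂ))) :=
      ((Complex.continuous_ofReal.tendsto _).comp harct).const_mul 2
    have h2 : (2 * ((π/2 : ℝ):ℂ)) = (π:ℂ) := by push_cast; ring
    rw [h2] at h4
    exact h4.congr (fun T => (hQval T).symm)
  have hlim : Tendsto C atTop (nhds ((∫ t : ℝ, φ t) - F k * (π:ℂ))) := by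
    have := hP.sub (hQ.const_mul (F k))
    exact this.congr (fun T => (hdecomp T).symm)
  have hkey : (∫ t : ℝ, φ t) - F k * (π:ℂ) = 0 := tendsto_nhds_unique hlim hCz
  have hL : (∫ t : ℝ, φ t) = F k * (π:ℂ) := sub_eq_zero.mp hkey
  have hπ : (π:ℂ) ≠ 0 := Complex.ofReal_ne_zero.mpr Real.pi_ne_zero
  rw [hφdef] at hL
  rw [hL]
  field_simp
end

section
/- Let χ be a real Dirichlet character modulo q (i.e. all values of χ lie in ℝ). Then for every integer n ≥ 1 one has a_n(χ) := ∑_{m ∣ n, m squarefree} χ(n/m) ≥ 0, and a_1(χ) = 1. -/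
open scoped ComplexOrder

/-- The Dirichlet series coefficients of `ζ(s)L(s,χ)/ζ(2s)`:
`a_n(χ) = ∑_{m ∣ n, m squarefree} χ(n/m)`. -/
noncomputable def coeffA {q : ℕ} (χ : DirichletCharacter ℂ q) (n : ℕ) : ℂ :=
  ∑ m ∈ n.divisors.filter Squarefree, χ ((n / m : ℕ) : ZMod q)

/-!
`a(χ)` is the Dirichlet convolution of the indicator of the squarefree numbers with `χ`, hence
multiplicative, so it suffices to check nonnegativity at prime powers. There
`a_{p^(k+1)}(χ) = χ(p)^k (χ(p) + 1)`, which is nonnegative because a real character only takes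
the values `0`, `1` and `-1`.
-/

theorem Nat.divisors_filter_squarefree_prime_pow {p k : ℕ} (hp : p.Prime) (hk : k ≠ 0) :
    (p ^ k).divisors.filter Squarefree = {1, p} := by
  ext m
  simp only [Finset.mem_filter, Nat.mem_divisors_prime_pow hp, Finset.mem_insert,
    Finset.mem_singleton]
  constructor
  · rintro ⟨⟨i, -, rfl⟩, hsq⟩
    rcases i with _ | _ | i
    · exact Or.inl (pow_zero p)
    · exact Or.inr (pow_one p)
    · simp [Nat.squarefree_pow_iff hp.ne_one] at hsq
  · rintro (rfl | rfl)
    · exact ⟨⟨0, Nat.zero_le k, (pow_zero p).symm⟩, squarefree_one⟩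
    · exact ⟨⟨1, Nat.one_le_iff_ne_zero.mpr hk, (pow_one _).symm⟩, hp.squarefree⟩

namespace ArithmeticFunction

def squarefreeIndicator (R : Type*) [MonoidWithZero R] : ArithmeticFunction R :=
  ⟨fun n => if Squarefree n then 1 else 0, by simp⟩

variable {R : Type*}

theorem squarefreeIndicator_apply [MonoidWithZero R] (n : ℕ) :
    squarefreeIndicator R n = if Squarefree n then 1 else 0 :=
  rfl

theorem isMultiplicative_squarefreeIndicator [MonoidWithZero R] :
    (squarefreeIndicator R).IsMultiplicative := by
  refine ⟨by simp [squarefreeIndicator_apply], fun {m n} hmn => ?_⟩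
  simp only [squarefreeIndicator_apply, Nat.squarefree_mul hmn]
  split_ifs <;> simp_all

theorem IsMultiplicative.nonneg_of_prime_pow [CommSemiring R] [PartialOrder R] [IsOrderedRing R]
    {f : ArithmeticFunction R} (hf : f.IsMultiplicative)
    (h : ∀ p k : ℕ, p.Prime → 0 ≤ f (p ^ (k + 1))) (n : ℕ) : 0 ≤ f n := by
  rcases eq_or_ne n 0 with rfl | hn
  · simp
  rw [hf.multiplicative_factorization f hn]
  refine Finset.prod_nonneg fun p hp => ?_
  rcases n.factorization p with _ | k
  · simp [hf.map_one]
  · exact h p k (Nat.prime_of_mem_primeFactors (by simpa using hp))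

end ArithmeticFunction

theorem DirichletCharacter.isQuadratic_of_real_valued {q : ℕ} (χ : DirichletCharacter ℂ q)
    (hreal : ∀ a : ZMod q, ∃ r : ℝ, χ a = r) : MulChar.IsQuadratic χ := by
  intro a
  by_cases ha : IsUnit a
  · obtain ⟨r, hr⟩ := hreal a
    have hr_abs : |r| = 1 := by simpa [hr] using χ.unit_norm_eq_one ha.unit
    rcases (abs_eq zero_le_one).mp hr_abs with rfl | rfl <;> simp [hr]
  · exact Or.inl (χ.map_nonunit ha)

theorem MulChar.IsQuadratic.pow_succ_add_pow_nonneg {M R : Type*} [CommMonoid M] [CommRing R]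
    [PartialOrder R] [IsOrderedRing R] {χ : MulChar M R} (hχ : χ.IsQuadratic) (a : M) (k : ℕ) :
    0 ≤ χ a ^ (k + 1) + χ a ^ k := by
  rcases hχ a with h | h | h <;> rw [h]
  · rw [zero_pow k.succ_ne_zero, zero_add]
    exact pow_nonneg le_rfl k
  · rw [one_pow, one_pow]
    exact add_nonneg zero_le_one zero_le_one
  · simp [pow_succ]

open ArithmeticFunction in
theorem coeffA_eq_squarefreeIndicator_mul {q : ℕ} (χ : DirichletCharacter ℂ q) :
    coeffA χ = ⇑(squarefreeIndicator ℂ * toArithmeticFunction (χ ·)) := by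
  funext n
  rw [mul_apply, Nat.sum_divisorsAntidiagonal
    (fun a b => squarefreeIndicator ℂ a * toArithmeticFunction (χ ·) b), coeffA, Finset.sum_filter]
  refine Finset.sum_congr rfl fun m hm => ?_
  have hnm : n / m ≠ 0 := (Nat.div_pos (Nat.divisor_le hm) (Nat.pos_of_mem_divisors hm)).ne'
  simp [squarefreeIndicator_apply, toArithmeticFunction, hnm]

theorem coeffA_prime_pow {q : ℕ} (χ : DirichletCharacter ℂ q) {p : ℕ} (hp : p.Prime) (k : ℕ) :
    coeffA χ (p ^ (k + 1)) = χ p ^ (k + 1) + χ p ^ k := by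
  rw [coeffA, Nat.divisors_filter_squarefree_prime_pow hp k.succ_ne_zero,
    Finset.sum_pair hp.one_lt.ne, Nat.div_one, pow_succ, Nat.mul_div_cancel _ hp.pos]
  push_cast
  rw [map_mul, map_pow, ← pow_succ]

/-- If `χ` is a real Dirichlet character modulo `q`, then for every `n ≥ 1`
the coefficient `a_n(χ) = ∑_{m ∣ n, m squarefree} χ(n/m)` is nonnegative, and `a_1(χ) = 1`. -/
theorem coeffA_nonneg_and_one
    (q : ℕ) (χ : DirichletCharacter ℂ q) (hreal : ∀ n : ZMod q, ∃ r : ℝ, χ n = (r : ℂ)) :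
    (∀ n : ℕ, 1 ≤ n → 0 ≤ coeffA χ n) ∧ coeffA χ 1 = 1 := by
  have hmul := ArithmeticFunction.isMultiplicative_squarefreeIndicator.mul
    (DirichletCharacter.isMultiplicative_toArithmeticFunction χ)
  have hquad := χ.isQuadratic_of_real_valued hreal
  rw [coeffA_eq_squarefreeIndicator_mul]
  refine ⟨fun n _ => hmul.nonneg_of_prime_pow (fun p k hp => ?_) n, hmul.map_one⟩
  rw [← coeffA_eq_squarefreeIndicator_mul, coeffA_prime_pow χ hp]
  exact hquad.pow_succ_add_pow_nonneg p k
end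

section
/- Let χ be a real Dirichlet character modulo q and let s ∈ ℂ with Re s > 1. Then ζ(s)·L(s,χ)/ζ(2s) = ∑_{n=1}^∞ a_n(χ) n^{−s}, where a_n(χ) = ∑_{m ∣ n, m squarefree} χ(n/m), the series on the right converging absolutely. -/
open Complex

open scoped LSeries.notation

/-- indicator of squarefree numbers -/
noncomputable def sqfInd : ℕ → ℂ := fun n => if Squarefree n then 1 else 0

/-- indicator of positive squares -/
noncomputable def sqInd : ℕ → ℂ := fun n => if n ≠ 0 ∧ IsSquare n then 1 else 0

lemma uniq_sqf_sq {n : ℕ} (hn : n ≠ 0) :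
    ∃! p : ℕ × ℕ, p ∈ n.divisorsAntidiagonal ∧ Squarefree p.1 ∧ IsSquare p.2 := by
  obtain ⟨a, b, hab, ha⟩ := Nat.sq_mul_squarefree n
  refine ⟨(a, b ^ 2), ⟨?_, ha, ⟨b, by ring⟩⟩, ?_⟩
  · rw [Nat.mem_divisorsAntidiagonal]
    exact ⟨by rw [← hab]; ring, hn⟩
  · rintro ⟨a', c'⟩ ⟨hmem, ha', hsq'⟩
    dsimp only at ha' hsq' ⊢
    obtain ⟨b', hb'⟩ := hsq'
    rw [Nat.mem_divisorsAntidiagonal] at hmem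
    obtain ⟨hprod, -⟩ := hmem
    dsimp only at hprod
    have hc' : c' = b' ^ 2 := by rw [hb']; ring
    subst hc'
    have ha0 : a ≠ 0 := ha.ne_zero
    have ha'0 : a' ≠ 0 := ha'.ne_zero
    have hb0 : b ≠ 0 := by
      rintro rfl; rw [← hab] at hn; simp at hn
    have hb'0 : b' ≠ 0 := by
      rintro rfl; rw [← hprod] at hn; simp at hn
    have haa : a' = a := by
      refine Nat.eq_of_factorization_eq ha'0 ha0 fun p => ?_
      have h1 : a'.factorization p + 2 * b'.factorization p = n.factorization p := by
        rw [← hprod, Nat.factorization_mul ha'0 (pow_ne_zero 2 hb'0),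
          Nat.factorization_pow]
        simp [mul_comm]
      have h2 : a.factorization p + 2 * b.factorization p = n.factorization p := by
        rw [← hab, Nat.factorization_mul (pow_ne_zero 2 hb0) ha0, Nat.factorization_pow]
        simp [mul_comm, add_comm]
      have h3 := ha'.natFactorization_le_one p
      have h4 := ha.natFactorization_le_one p
      omega
    have hbb : b' = b := by
      have heq : a * b' ^ 2 = a * b ^ 2 := by
        calc a * b' ^ 2 = a' * b' ^ 2 := by rw [haa]
        _ = n := hprod
        _ = a * b ^ 2 := by rw [← hab]; ring
      have h2 := Nat.eq_of_mul_eq_mul_left (Nat.pos_of_ne_zero ha0) heq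
      exact Nat.pow_left_injective (by norm_num) h2
    rw [haa, hbb]

lemma sqfInd_conv_sqInd {n : ℕ} (hn : n ≠ 0) : (sqfInd ⍟ sqInd) n = 1 := by
  rw [LSeries.convolution_def]
  dsimp only
  obtain ⟨p, ⟨hp, hp1, hp2⟩, hpu⟩ := uniq_sqf_sq hn
  have key : ∀ x ∈ n.divisorsAntidiagonal, sqfInd x.1 * sqInd x.2
      = if x = p then 1 else 0 := by
    intro x hx
    have hx2 : x.2 ≠ 0 := (Nat.ne_zero_of_mem_divisorsAntidiagonal hx).2
    by_cases hxp : x = p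
    · subst hxp; simp [sqfInd, sqInd, hp1, hp2, hx2]
    · rw [if_neg hxp]
      have h : ¬(Squarefree x.1 ∧ IsSquare x.2) := fun h => hxp (hpu x ⟨hx, h.1, h.2⟩)
      rw [not_and_or] at h
      rcases h with h | h
      · simp [sqfInd, h]
      · simp [sqInd, h]
  rw [Finset.sum_congr rfl key, Finset.sum_ite_eq' _ p (fun _ => (1 : ℂ)), if_pos hp]

lemma summable_sqfInd {s : ℂ} (hs : 1 < s.re) : LSeriesSummable sqfInd s :=
  LSeriesSummable_of_bounded_of_one_lt_re (m := 1)
    (fun n _ => by rw [sqfInd]; split_ifs <;> simp) hs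

lemma summable_sqInd {s : ℂ} (hs : 1 < s.re) : LSeriesSummable sqInd s :=
  LSeriesSummable_of_bounded_of_one_lt_re (m := 1)
    (fun n _ => by rw [sqInd]; split_ifs <;> simp) hs

lemma LSeries_sqInd {s : ℂ} (hs : 1 < s.re) :
    LSeries sqInd s = riemannZeta (2 * s) := by
  have h2s : 1 < (2 * s).re := by
    rw [mul_re]; simp; nlinarith [s.re, hs]
  rw [← LSeries_one_eq_riemannZeta h2s, LSeries, LSeries]
  have hinj : Function.Injective (fun m : ℕ => m ^ 2) :=
    Nat.pow_left_injective (by norm_num)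
  rw [← Function.Injective.tsum_eq hinj (f := LSeries.term sqInd s) ?_]
  · refine tsum_congr fun m => ?_
    rcases eq_or_ne m 0 with rfl | hm
    · simp
    · have hm2 : m ^ 2 ≠ 0 := pow_ne_zero 2 hm
      rw [LSeries.term_of_ne_zero hm2, LSeries.term_of_ne_zero hm, Pi.one_apply]
      have h1 : sqInd (m ^ 2) = 1 := by
        simp only [sqInd, if_pos (⟨hm2, ⟨m, pow_two m⟩⟩ : m ^ 2 ≠ 0 ∧ IsSquare (m ^ 2))]
      rw [h1]
      congr 1
      push_cast
      rw [sq (m : ℂ), natCast_mul_natCast_cpow,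
        show (2 : ℂ) * s = ((2 : ℕ) : ℂ) * s by norm_num, Complex.cpow_nat_mul, sq]
  · intro n hn
    rcases eq_or_ne n 0 with rfl | hn0
    · exact ⟨0, by simp⟩
    · rw [Function.mem_support, LSeries.term_of_ne_zero hn0] at hn
      have : sqInd n ≠ 0 := fun h => hn (by rw [h, zero_div])
      rw [sqInd] at this
      have hsq : IsSquare n := by
        by_contra h; exact this (if_neg (by tauto))
      obtain ⟨r, hr⟩ := hsq
      exact ⟨r, by rw [hr]; ring⟩

lemma coeffA_eq_conv {q : ℕ} (χ : DirichletCharacter ℂ q) :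
    coeffA χ = sqfInd ⍟ (fun n : ℕ => χ (n : ZMod q)) := by
  funext n
  rw [LSeries.convolution_def]
  show _ = ∑ p ∈ n.divisorsAntidiagonal, sqfInd p.1 * χ ((p.2 : ℕ) : ZMod q)
  rw [coeffA, Nat.sum_divisorsAntidiagonal (fun a b => sqfInd a * χ ((b : ℕ) : ZMod q)),
    Finset.sum_filter]
  refine Finset.sum_congr rfl fun m hm => ?_
  rw [sqfInd]
  split_ifs <;> simp

/-- Let `χ` be a real Dirichlet character modulo `q` and `s ∈ ℂ` with
`Re s > 1`. Then `ζ(s)·L(s,χ)/ζ(2s) = ∑_{n≥1} a_n(χ) n^{-s}`, the series converging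
absolutely, where `L(s,χ) = ∑_{n≥1} χ(n) n^{-s}`. -/
theorem zeta_mul_LSeries_div_zeta_two_eq
    (q : ℕ) (χ : DirichletCharacter ℂ q) (hreal : ∀ n : ZMod q, ∃ r : ℝ, χ n = (r : ℂ))
    (s : ℂ) (hs : 1 < s.re) :
    Summable (fun n : ℕ => ‖coeffA χ n / (n : ℂ) ^ s‖) ∧
    riemannZeta s * LSeries (fun n : ℕ => χ (n : ZMod q)) s / riemannZeta (2 * s)
      = ∑' n : ℕ, coeffA χ n / (n : ℂ) ^ s := by
  have hs0 : s ≠ 0 := fun h => by simp [h] at hs; linarith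
  have hχ : LSeriesSummable (fun n : ℕ => χ (n : ZMod q)) s :=
    DirichletCharacter.LSeriesSummable_of_one_lt_re χ hs
  have hconv : LSeriesSummable (coeffA χ) s := by
    rw [coeffA_eq_conv]
    exact (summable_sqfInd hs).convolution hχ
  have hterm : ∀ n : ℕ, LSeries.term (coeffA χ) s n = coeffA χ n / (n : ℂ) ^ s := by
    intro n
    rcases eq_or_ne n 0 with rfl | hn
    · simp [coeffA, Complex.zero_cpow hs0]
    · exact LSeries.term_of_ne_zero hn _ _
  constructor
  · have := summable_norm_iff.mpr hconv
    exact this.congr fun n => by rw [hterm n]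
  · have h2s : 1 < (2 * s).re := by
      rw [mul_re]; simp; nlinarith [s.re, hs]
    have hζ2 : riemannZeta (2 * s) ≠ 0 := riemannZeta_ne_zero_of_one_lt_re h2s
    have hzeta : riemannZeta s = LSeries sqfInd s * riemannZeta (2 * s) := by
      rw [← LSeries_sqInd hs, ← LSeries_convolution' (summable_sqfInd hs) (summable_sqInd hs),
        ← LSeries_one_eq_riemannZeta hs]
      exact (LSeries_congr (s := s) fun {n} hn => (sqfInd_conv_sqInd hn).symm)
    have hL : LSeries (coeffA χ) s = ∑' n, coeffA χ n / (n : ℂ) ^ s := tsum_congr hterm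
    rw [hzeta, ← hL, coeffA_eq_conv, LSeries_convolution' (summable_sqfInd hs) hχ]
    field_simp
end
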